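/- arXiv:1511.07269 — 8 statements merged into one kernel-verified Lean document; each statement's English description precedes it below -/
import Mathlib

section
/- For a finite group G, if the proportion of commuting pairs |{(u,v) ∈ G×G : uv = vu}| / |G|² is strictly greater than 5/8, then G is abelian. -/
/-- Degree of commutativity of a group (meaningful for finite groups). -/
noncomputable def dc (G : Type*) [Group G] : ℚ :=
  (Nat.card {p : G × G // p.1 * p.2 = p.2 * p.1} : ℚ) / (Nat.card G : ℚ) ^ 2

open ConjClasses in
/-- If `G` is a finite nonabelian group, then `8 * k ≤ 5 * |G|` where `k` is the number of
conjugacy classes. -/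
lemma gustafson_aux (G : Type*) [Group G] [Finite G] (hna : ¬ ∀ a b : G, a * b = b * a) :
    8 * Nat.card (ConjClasses G) ≤ 5 * Nat.card G := by
  classical
  cases nonempty_fintype G
  -- the center has index at least 4
  have hidx : 4 ≤ (Subgroup.center G).index := by
    by_contra hlt
    push_neg at hlt
    have hne : (Subgroup.center G).index ≠ 0 := Subgroup.index_ne_zero_of_finite
    have hcard : Nat.card (G ⧸ Subgroup.center G) = (Subgroup.center G).index := rfl
    have hcyc : IsCyclic (G ⧸ Subgroup.center G) := by
      rcases (by omega : (Subgroup.center G).index = 1 ∨ (Subgroup.center G).index = 2 ∨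
          (Subgroup.center G).index = 3) with hi | hi | hi
      · have : Nat.card (G ⧸ Subgroup.center G) = 1 := hcard.trans hi
        have := (Nat.card_eq_one_iff_unique.mp this).1
        infer_instance
      · exact isCyclic_of_prime_card (p := 2) (hcard.trans hi)
      · exact isCyclic_of_prime_card (p := 3) (hcard.trans hi)
    exact hna (commutative_of_cyclic_center_quotient (QuotientGroup.mk' (Subgroup.center G))
      (by rw [QuotientGroup.ker_mk']))
  -- hence `4 * |Z| ≤ |G|`
  have hz : 4 * Nat.card (Subgroup.center G) ≤ Nat.card G := by
    calc 4 * Nat.card (Subgroup.center G)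
        ≤ (Subgroup.center G).index * Nat.card (Subgroup.center G) :=
          Nat.mul_le_mul_right _ hidx
      _ = Nat.card G := by rw [mul_comm, Subgroup.card_mul_index]
  -- the class equation
  have hce := Group.nat_card_center_add_sum_card_noncenter_eq_card G
  have hfin : (noncenter G).Finite := Set.toFinite _
  -- number of conjugacy classes = |Z| + #noncentral classes
  have hk : Nat.card (ConjClasses G) =
      Nat.card (Subgroup.center G) + (noncenter G).ncard := by
    have h1 : Nat.card (Subgroup.center G) = ((noncenter G)ᶜ).ncard := by
      rw [← Nat.card_coe_set_eq]
      exact Nat.card_congr ((mk_bijOn G).equiv _)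
    rw [h1, add_comm, Set.ncard_add_ncard_compl, Nat.card_eq_fintype_card]
  -- each noncentral class has at least 2 elements
  have hsum : 2 * (noncenter G).ncard ≤ ∑ᶠ x ∈ noncenter G, Nat.card x.carrier := by
    rw [← hfin.coe_toFinset, finsum_mem_coe_finset, Set.ncard_coe_finset]
    calc 2 * hfin.toFinset.card = ∑ _x ∈ hfin.toFinset, 2 := by
          rw [Finset.sum_const, smul_eq_mul, mul_comm]
      _ ≤ ∑ x ∈ hfin.toFinset, Nat.card x.carrier := by
          refine Finset.sum_le_sum fun x hx => ?_
          have hx' : x.carrier.Nontrivial := (hfin.mem_toFinset.mp hx)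
          obtain ⟨a, ha, b, hb, hab⟩ := hx'
          rw [Nat.card_coe_set_eq]
          exact (Set.one_lt_ncard (Set.toFinite _)).mpr ⟨a, ha, b, hb, hab⟩
  omega

/-- Gustafson: a finite group with degree of commutativity `> 5/8` is abelian. -/
theorem gustafson (G : Type*) [Group G] [Finite G] (h : dc G > 5 / 8) :
    ∀ a b : G, a * b = b * a := by
  by_contra hna
  have hdc : dc G = commProb G := rfl
  have hle := gustafson_aux G hna
  have hpos : (0 : ℚ) < (Nat.card G : ℚ) := by
    exact_mod_cast Nat.card_pos
  have : commProb G ≤ 5 / 8 := by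
    rw [commProb_def', div_le_div_iff₀ hpos (by norm_num)]
    exact_mod_cast by linarith [show ((8 * Nat.card (ConjClasses G) : ℕ) : ℚ) ≤
      ((5 * Nat.card G : ℕ) : ℚ) from Nat.cast_le.mpr hle]
  rw [hdc] at h
  linarith
end

section
/- If G is a finite group and N a normal subgroup of G, then dc(G) ≤ dc(N) · dc(G/N). -/
theorem card_commuting_le (G : Type*) [Group G] [Finite G] (N : Subgroup G) [N.Normal] :
    Nat.card {p : G × G // p.1 * p.2 = p.2 * p.1} ≤
      Nat.card {p : N × N // p.1 * p.2 = p.2 * p.1} *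
        Nat.card {p : (G ⧸ N) × (G ⧸ N) // p.1 * p.2 = p.2 * p.1} := by
  classical
  rw [← Nat.card_prod]
  -- choice functions
  let X0 : G ⧸ N → G → G := fun c y =>
    if h : ∃ z : G, (z : G ⧸ N) = c ∧ z * y = y * z then h.choose else 1
  have hX0 : ∀ (c : G ⧸ N) (y : G), (∃ z : G, (z : G ⧸ N) = c ∧ z * y = y * z) →
      ((X0 c y : G ⧸ N) = c ∧ X0 c y * y = y * X0 c y) := by
    intro c y h
    simp only [X0, dif_pos h]
    exact h.choose_spec
  let Y1 : G → G ⧸ N → G := fun a c =>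
    if h : ∃ z : G, (z : G ⧸ N) = c ∧ z * a = a * z then h.choose else 1
  have hY1 : ∀ (a : G) (c : G ⧸ N), (∃ z : G, (z : G ⧸ N) = c ∧ z * a = a * z) →
      ((Y1 a c : G ⧸ N) = c ∧ Y1 a c * a = a * Y1 a c) := by
    intro a c h
    simp only [Y1, dif_pos h]
    exact h.choose_spec
  set CP := {p : G × G // p.1 * p.2 = p.2 * p.1} with hCP
  let x : CP → G := fun p => p.1.1
  let y : CP → G := fun p => p.1.2
  let x0 : CP → G := fun p => X0 (x p : G ⧸ N) (y p)
  let a : CP → G := fun p => (x0 p)⁻¹ * x p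
  let y1 : CP → G := fun p => Y1 (a p) (y p : G ⧸ N)
  let m : CP → G := fun p => (y1 p)⁻¹ * y p
  have hx0 : ∀ p : CP, ((x0 p : G ⧸ N) = (x p : G ⧸ N) ∧ x0 p * y p = y p * x0 p) :=
    fun p => hX0 _ _ ⟨x p, rfl, p.2⟩
  have haN : ∀ p : CP, a p ∈ N := fun p => (QuotientGroup.eq).mp (hx0 p).1
  have hay : ∀ p : CP, Commute (a p) (y p) := fun p =>
    ((show Commute (x0 p) (y p) from (hx0 p).2).inv_left).mul_left (show Commute (x p) (y p) from p.2)
  have hy1 : ∀ p : CP, ((y1 p : G ⧸ N) = (y p : G ⧸ N) ∧ y1 p * a p = a p * y1 p) :=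
    fun p => hY1 _ _ ⟨y p, rfl, (hay p).symm.eq⟩
  have hmN : ∀ p : CP, m p ∈ N := fun p => (QuotientGroup.eq).mp (hy1 p).1
  have ham : ∀ p : CP, a p * m p = m p * a p := fun p =>
    (((show Commute (y1 p) (a p) from (hy1 p).2).inv_left).mul_left
      ((hay p).symm)).symm.eq
  -- recovery equations
  have hyrec : ∀ p : CP, y p = y1 p * m p := fun p => by
    simp [m, mul_inv_cancel_left]
  have hxrec : ∀ p : CP, x p = x0 p * a p := fun p => by
    simp [a, mul_inv_cancel_left]
  let F : CP → ({p : N × N // p.1 * p.2 = p.2 * p.1} ×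
      {p : (G ⧸ N) × (G ⧸ N) // p.1 * p.2 = p.2 * p.1}) := fun p =>
    (⟨(⟨a p, haN p⟩, ⟨m p, hmN p⟩), Subtype.ext (ham p)⟩,
     ⟨((x p : G ⧸ N), (y p : G ⧸ N)), by
        show ((x p : G ⧸ N)) * (y p) = (y p) * (x p)
        rw [← QuotientGroup.mk_mul, ← QuotientGroup.mk_mul, p.2]⟩)
  have hF : Function.Injective F := by
    intro p q h
    have h1 : a p = a q := congrArg (fun r => ((r.1 : ({p : N × N // p.1 * p.2 = p.2 * p.1})).1.1 : G)) h
    have h2 : m p = m q := congrArg (fun r => ((r.1 : ({p : N × N // p.1 * p.2 = p.2 * p.1})).1.2 : G)) h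
    have h3 : (x p : G ⧸ N) = (x q : G ⧸ N) := congrArg (fun r => r.2.1.1) h
    have h4 : (y p : G ⧸ N) = (y q : G ⧸ N) := congrArg (fun r => r.2.1.2) h
    have hy' : y p = y q := by
      rw [hyrec p, hyrec q, h2]
      show Y1 (a p) (y p : G ⧸ N) * m q = Y1 (a q) (y q : G ⧸ N) * m q
      rw [h1, h4]
    have hx' : x p = x q := by
      rw [hxrec p, hxrec q, h1]
      show X0 (x p : G ⧸ N) (y p) * a q = X0 (x q : G ⧸ N) (y q) * a q
      rw [h3, hy']
    exact Subtype.ext (Prod.ext hx' hy')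
  exact Nat.card_le_card_of_injective F hF

/-- Gallagher: for a finite group `G` and a normal subgroup `N`,
`dc G ≤ dc N * dc (G ⧸ N)`. -/
theorem dc_le_dc_mul_dc_quotient (G : Type*) [Group G] [Finite G]
    (N : Subgroup G) [N.Normal] :
    dc G ≤ dc N * dc (G ⧸ N) := by
  have key := card_commuting_le G N
  have hG : Nat.card G = Nat.card (G ⧸ N) * Nat.card N :=
    Subgroup.card_eq_card_quotient_mul_card_subgroup N
  have hN : 0 < Nat.card N := Nat.card_pos
  have hQ : 0 < Nat.card (G ⧸ N) := Nat.card_pos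
  unfold dc
  rw [div_mul_div_comm, ← Nat.cast_mul, ← mul_pow, ← Nat.cast_mul, hG, Nat.mul_comm (Nat.card N)]
  gcongr
end

section
/- If G is a finite nonabelian group, then dc(G) ≤ 5/8. -/
/-- A finite nonabelian group has degree of commutativity at most `5/8`. -/
theorem dc_le_five_eighths (G : Type*) [Group G] [Finite G]
    (h : ¬ ∀ a b : G, a * b = b * a) :
    dc G ≤ 5 / 8 := by
  classical
  have : Fintype G := Fintype.ofFinite G
  set n := Nat.card G with hn
  set z := Nat.card (Subgroup.center G) with hz
  -- the center is proper, so index ≥ 2, and G/Z not cyclic, so index ≥ 4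
  have hindex : 4 ≤ (Subgroup.center G).index := by
    by_contra hlt
    push_neg at hlt
    interval_cases hidx : (Subgroup.center G).index
    · exact (Subgroup.center G).index_ne_zero_of_finite hidx
    · exact h fun a b => by
        have := Subgroup.index_eq_one.mp hidx
        have ha : a ∈ Subgroup.center G := this ▸ Subgroup.mem_top a
        exact (Subgroup.mem_center_iff.mp ha b).symm
    all_goals {
      have hcard : Nat.card (G ⧸ Subgroup.center G) = (Subgroup.center G).index :=
        rfl
      have hcyc : IsCyclic (G ⧸ Subgroup.center G) := by
        have hp : Nat.Prime (Nat.card (G ⧸ Subgroup.center G)) := by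
          rw [hcard, hidx]; norm_num
        haveI := Fact.mk hp
        exact isCyclic_of_prime_card rfl
      have := commutative_of_cyclic_center_quotient (QuotientGroup.mk' (Subgroup.center G))
        (by rw [QuotientGroup.ker_mk'])
      exact h fun a b => this a b
    }
  -- 4z ≤ n
  have hzn : 4 * z ≤ n := by
    calc 4 * z ≤ (Subgroup.center G).index * z := Nat.mul_le_mul_right z hindex
    _ = n := by rw [mul_comm, hz, Subgroup.card_mul_index]
  -- commuting pairs as a sum of centralizer cardinalities
  set S := Nat.card {p : G × G // p.1 * p.2 = p.2 * p.1} with hS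
  have hsum : S = ∑ g : G, Nat.card {x : G // g * x = x * g} := by
    rw [hS, Nat.card_congr (Equiv.subtypeProdEquivSigmaSubtype fun a b : G => a * b = b * a)]
    simp [Nat.card_eq_fintype_card, Fintype.card_sigma]
  have hbound : ∀ g : G, 2 * Nat.card {x : G // g * x = x * g}
      ≤ n + (if g ∈ Subgroup.center G then n else 0) := by
    intro g
    have hcent : Nat.card {x : G // g * x = x * g}
        = Nat.card (Subgroup.centralizer {g}) := by
      apply Nat.card_congr
      apply Equiv.subtypeEquivRight
      intro x
      simp [Subgroup.mem_centralizer_singleton_iff, eq_comm]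
    have hcle : Nat.card (Subgroup.centralizer ({g} : Set G)) ≤ n :=
      Nat.card_le_card_of_injective _ (Subgroup.subtype_injective _)
    by_cases hg : g ∈ Subgroup.center G
    · simp only [hg, if_pos]
      rw [hcent, two_mul]
      omega
    · simp only [hg, if_neg, not_false_iff, add_zero]
      rw [hcent]
      have hne : Subgroup.centralizer ({g} : Set G) ≠ ⊤ := by
        intro htop
        exact hg (Subgroup.centralizer_eq_top_iff_subset.mp htop (Set.mem_singleton g))
      have hidx2 : 2 ≤ (Subgroup.centralizer ({g} : Set G)).index := by
        have h0 : (Subgroup.centralizer ({g} : Set G)).index ≠ 0 :=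
          Subgroup.index_ne_zero_of_finite
        have h1 : (Subgroup.centralizer ({g} : Set G)).index ≠ 1 := fun h1 =>
          hne (Subgroup.index_eq_one.mp h1)
        omega
      calc 2 * Nat.card (Subgroup.centralizer ({g} : Set G))
          ≤ (Subgroup.centralizer ({g} : Set G)).index
            * Nat.card (Subgroup.centralizer ({g} : Set G)) :=
            Nat.mul_le_mul_right _ hidx2
        _ = n := by rw [mul_comm, Subgroup.card_mul_index]
  have hsum2 : 2 * S ≤ n * n + z * n := by
    calc 2 * S = ∑ g : G, 2 * Nat.card {x : G // g * x = x * g} := by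
          rw [hsum, Finset.mul_sum]
      _ ≤ ∑ g : G, (n + (if g ∈ Subgroup.center G then n else 0)) :=
          Finset.sum_le_sum fun g _ => hbound g
      _ = n * n + z * n := by
          rw [Finset.sum_add_distrib, Finset.sum_const, smul_eq_mul,
            ← Finset.sum_filter, Finset.sum_const, smul_eq_mul]
          congr 1
          · rw [hn, Nat.card_eq_fintype_card, Finset.card_univ]
          · congr 1
            rw [hz, Nat.card_eq_fintype_card, Fintype.card_subtype]
  have hfinal : 8 * S ≤ 5 * n ^ 2 := by nlinarith
  have hnpos : 0 < n := Nat.card_pos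
  rw [dc, ← hS, ← hn]
  rw [div_le_div_iff₀ (by positivity) (by norm_num)]
  have hc := (Nat.cast_le (α := ℚ)).mpr hfinal
  push_cast at hc ⊢
  linarith
end

section
/- Let G be a finitely generated residually finite group that is not virtually abelian, such that dc(G/N) ≥ dc_X(G) for every finite-index normal subgroup N (as holds under subexponential growth). Then dc_X(G) = 0. -/
/-!
For a finite group `Q` and a normal subgroup `M`, Gallagher's inequality
`dc Q ≤ dc M * dc (Q ⧸ M)` holds, and `dc Q ≤ 5 / 8` as soon as `Q` is not abelian: the centre
then has index at least `4`, and every other centralizer has index at least `2`.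

Let `N` be a normal subgroup of finite index. As `G` is not virtually abelian, some `a, b ∈ N`
do not commute, and residual finiteness yields a normal `M` of finite index avoiding
`(a * b)⁻¹ * (b * a)`. In `G ⧸ (N ⊓ M)` the image of `N` is then nonabelian with quotient
`G ⧸ N`, so `dc (G ⧸ (N ⊓ M)) ≤ 5 / 8 * dc (G ⧸ N)`. Iterating gives finite quotients with
`dc ≤ (5 / 8) ^ k` for every `k`, and these bound `dc_X(G)` from above.
-/

open Filter

/-- The ball of radius `n` in the word metric on `G` with respect to `X`. -/
def ball {G : Type*} [Group G] (X : Finset G) (n : ℕ) : Set G :=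
  {g | ∃ l : List G, l.length ≤ n ∧ (∀ x ∈ l, x ∈ X ∨ x⁻¹ ∈ X) ∧ l.prod = g}

/-- The degree of commutativity of `G` with respect to the finite generating set `X`:
the limsup of the proportions of commuting pairs in balls. -/
noncomputable def dcX {G : Type*} [Group G] (X : Finset G) : ℝ :=
  limsup (fun n =>
    (Nat.card {p : G × G // p.1 ∈ ball X n ∧ p.2 ∈ ball X n ∧ p.1 * p.2 = p.2 * p.1} : ℝ) /
      (Nat.card (ball X n) : ℝ) ^ 2) atTop

theorem dc_eq_commProb (Q : Type*) [Group Q] : dc Q = commProb Q := rfl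

theorem commProb_congr {M N : Type*} [Mul M] [Mul N] (e : M ≃* N) :
    commProb M = commProb N := by
  have hpairs :
      Nat.card {p : M × M // Commute p.1 p.2} = Nat.card {p : N × N // Commute p.1 p.2} :=
    Nat.card_congr <| (e.toEquiv.prodCongr e.toEquiv).subtypeEquiv fun p => by
      simp [Commute, SemiconjBy, ← map_mul, e.injective.eq_iff]
  rw [commProb_def, commProb_def, hpairs, Nat.card_congr e.toEquiv]

section Gallagher

variable {Q : Type*} [Group Q]

theorem Subgroup.exists_inv_mul_mem_and_commute (M : Subgroup Q) (a : Q ⧸ M) (y : Q) :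
    ∃ c : Q, ∀ x : Q, (x : Q ⧸ M) = a → Commute x y →
      c⁻¹ * x ∈ M ∧ Commute (c⁻¹ * x) y := by
  by_cases h : ∃ x₀ : Q, (x₀ : Q ⧸ M) = a ∧ Commute x₀ y
  · obtain ⟨x₀, hx₀, hx₀y⟩ := h
    exact ⟨x₀, fun x hx hxy =>
      ⟨QuotientGroup.eq.mp (hx₀.trans hx.symm), hx₀y.inv_left.mul_left hxy⟩⟩
  · exact ⟨1, fun x hx hxy => absurd ⟨x, hx, hxy⟩ h⟩

theorem Subgroup.card_commute_le_mul_card_commute_quotient [Finite Q] (M : Subgroup Q)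
    [M.Normal] :
    Nat.card {p : Q × Q // Commute p.1 p.2} ≤
      Nat.card {p : M × M // Commute p.1 p.2} *
        Nat.card {p : (Q ⧸ M) × (Q ⧸ M) // Commute p.1 p.2} := by
  -- Translating twice by the chosen `c` sends a commuting pair `(x, y)` to a commuting pair
  -- `(m₁, m₂)` of `M`, injectively once the cosets of `x` and `y` are remembered.
  choose c hc using M.exists_inv_mul_mem_and_commute
  let m₁ (p : Q × Q) : Q := (c p.1 p.2)⁻¹ * p.1
  let m₂ (p : Q × Q) : Q := (c p.2 (m₁ p))⁻¹ * p.2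
  have hm₁ (p : {p : Q × Q // Commute p.1 p.2}) := hc _ _ p.1.1 rfl p.2
  have hm₂ (p : {p : Q × Q // Commute p.1 p.2}) := hc _ _ p.1.2 rfl (hm₁ p).2.symm
  let f (p : {p : Q × Q // Commute p.1 p.2}) :
      {p : M × M // Commute p.1 p.2} × {p : (Q ⧸ M) × (Q ⧸ M) // Commute p.1 p.2} :=
    (⟨(⟨m₁ p, (hm₁ p).1⟩, ⟨m₂ p, (hm₂ p).1⟩), Subtype.ext (hm₂ p).2.symm.eq⟩,
      ⟨((p.1.1 : Q ⧸ M), (p.1.2 : Q ⧸ M)),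
        by simp [Commute, SemiconjBy, ← QuotientGroup.mk_mul, p.2.eq]⟩)
  refine (Nat.card_le_card_of_injective f ?_).trans_eq (Nat.card_prod _ _)
  rintro ⟨⟨x, y⟩, _⟩ ⟨⟨x', y'⟩, _⟩ h
  have h₁ : m₁ (x, y) = m₁ (x', y') := congrArg (fun r => (r.1.1.1 : Q)) h
  have h₂ : m₂ (x, y) = m₂ (x', y') := congrArg (fun r => (r.1.1.2 : Q)) h
  have hx : (x : Q ⧸ M) = x' := congrArg (fun r => r.2.1.1) h
  have hy : (y : Q ⧸ M) = y' := congrArg (fun r => r.2.1.2) h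
  obtain rfl : y = y' := by simpa [m₂, hy, h₁] using h₂
  obtain rfl : x = x' := by simpa [m₁, hx] using h₁
  rfl

theorem Subgroup.commProb_le_mul_commProb_quotient [Finite Q] (M : Subgroup Q) [M.Normal] :
    commProb Q ≤ commProb M * commProb (Q ⧸ M) := by
  have hcard : (Nat.card Q : ℚ) = Nat.card M * Nat.card (Q ⧸ M) := by
    rw [← M.index_eq_card]; exact_mod_cast M.card_mul_index.symm
  rw [commProb_def, commProb_def, commProb_def, div_mul_div_comm, ← mul_pow, ← hcard,
    div_le_div_iff_of_pos_right (pow_pos (Nat.cast_pos.mpr Finite.card_pos) 2)]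
  exact_mod_cast M.card_commute_le_mul_card_commute_quotient

end Gallagher

section FiveEighths

variable {Q : Type*} [Group Q]

theorem four_le_index_center [Finite Q] (h : ¬ IsMulCommutative Q) :
    4 ≤ (Subgroup.center Q).index := by
  by_contra! hlt
  have hcard := (Subgroup.center Q).index_eq_card
  have : IsCyclic (Q ⧸ Subgroup.center Q) := by
    interval_cases hi : (Subgroup.center Q).index
    · exact absurd hi Subgroup.index_ne_zero_of_finite
    · exact @isCyclic_of_subsingleton _ _ (Nat.card_eq_one_iff_unique.mp hcard.symm).1
    · exact @isCyclic_of_prime_card _ _ 2 ⟨Nat.prime_two⟩ hcard.symm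
    · exact @isCyclic_of_prime_card _ _ 3 ⟨Nat.prime_three⟩ hcard.symm
  exact h (isMulCommutative_of_isCyclic_quotient_center_self Q)

theorem card_commute_eq_sum_card_commute [Fintype Q] :
    Nat.card {p : Q × Q // Commute p.1 p.2} = ∑ x : Q, Nat.card {y // Commute x y} := by
  rw [Nat.card_congr (Equiv.subtypeProdEquivSigmaSubtype fun x y : Q => Commute x y),
    Nat.card_sigma]

theorem card_commute_eq_card_centralizer (x : Q) :
    Nat.card {y // Commute x y} = Nat.card (Subgroup.centralizer {x}) :=
  Nat.card_congr <| Equiv.subtypeEquivRight fun y => by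
    rw [Subgroup.mem_centralizer_singleton_iff, Commute, SemiconjBy, eq_comm]

theorem two_mul_card_commute_le_of_notMem_center [Finite Q] {x : Q}
    (hx : x ∉ Subgroup.center Q) : 2 * Nat.card {y // Commute x y} ≤ Nat.card Q := by
  set C := Subgroup.centralizer {x}
  have hne : C ≠ ⊤ := fun htop => hx <| Subgroup.mem_center_iff.mpr fun g =>
    Subgroup.mem_centralizer_singleton_iff.mp (show g ∈ C from htop ▸ Subgroup.mem_top g)
  have h0 := C.index_ne_zero_of_finite
  have h1 : C.index ≠ 1 := mt Subgroup.index_eq_one.mp hne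
  calc 2 * Nat.card {y // Commute x y} = 2 * Nat.card C := by
        rw [card_commute_eq_card_centralizer]
    _ ≤ C.index * Nat.card C := Nat.mul_le_mul_right _ (by omega)
    _ = Nat.card Q := by rw [mul_comm, C.card_mul_index]

theorem eight_mul_card_commute_le [Finite Q] (h : ¬ IsMulCommutative Q) :
    8 * Nat.card {p : Q × Q // Commute p.1 p.2} ≤ 5 * Nat.card Q ^ 2 := by
  classical
  have := Fintype.ofFinite Q
  have hpoint (x : Q) : 2 * Nat.card {y // Commute x y} ≤
      Nat.card Q + if x ∈ Subgroup.center Q then Nat.card Q else 0 := by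
    split_ifs with hx
    · have := Finite.card_subtype_le fun y => Commute x y
      omega
    · simpa using two_mul_card_commute_le_of_notMem_center hx
  have hsum := Finset.sum_le_sum fun x (_ : x ∈ Finset.univ) => hpoint x
  have hZ : 4 * Nat.card (Subgroup.center Q) ≤ Nat.card Q := by
    rw [← (Subgroup.center Q).card_mul_index, mul_comm 4]
    exact Nat.mul_le_mul_left _ (four_le_index_center h)
  rw [← Finset.mul_sum, ← card_commute_eq_sum_card_commute, Finset.sum_add_distrib,
    Finset.sum_ite] at hsum
  have hZcard :
      (Finset.univ.filter (· ∈ Subgroup.center Q)).card = Nat.card (Subgroup.center Q) := by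
    rw [Nat.card_eq_fintype_card, Fintype.card_subtype]
  rw [Finset.sum_const, Finset.sum_const, Finset.sum_const_zero, add_zero, smul_eq_mul,
    smul_eq_mul, Finset.card_univ, ← Nat.card_eq_fintype_card, hZcard] at hsum
  nlinarith

theorem commProb_le_five_eighths [Finite Q] (h : ¬ IsMulCommutative Q) : commProb Q ≤ 5 / 8 := by
  have hle : (8 * Nat.card {p : Q × Q // Commute p.1 p.2} : ℚ) ≤ 5 * Nat.card Q ^ 2 := by
    exact_mod_cast eight_mul_card_commute_le h
  rw [commProb_def, div_le_iff₀ (pow_pos (Nat.cast_pos.mpr Finite.card_pos) 2)]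
  linarith

end FiveEighths

section ResiduallyFinite

variable {G : Type*} [Group G]

theorem commProb_quotient_le_commProb_map_mul {N N' : Subgroup G} [N.Normal] [N'.Normal]
    [N'.FiniteIndex] (h : N' ≤ N) :
    commProb (G ⧸ N') ≤ commProb (N.map (QuotientGroup.mk' N')) * commProb (G ⧸ N) := by
  rw [← commProb_congr (QuotientGroup.quotientQuotientEquivQuotient N' N h)]
  exact (N.map (QuotientGroup.mk' N')).commProb_le_mul_commProb_quotient

theorem not_isMulCommutative_map_mk' {N N' : Subgroup G} [N'.Normal] {a b : G} (ha : a ∈ N)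
    (hb : b ∈ N) (hab : (a * b)⁻¹ * (b * a) ∉ N') :
    ¬ IsMulCommutative (N.map (QuotientGroup.mk' N')) := by
  intro hcomm
  have := hcomm.is_comm.comm ⟨_, Subgroup.mem_map_of_mem _ ha⟩
    ⟨_, Subgroup.mem_map_of_mem _ hb⟩
  exact hab (QuotientGroup.eq.mp (by simpa using congrArg Subtype.val this))

variable (hres : ∀ g : G, g ≠ 1 → ∃ N : Subgroup G, N.Normal ∧ N.FiniteIndex ∧ g ∉ N)
  (hnva : ¬ ∃ H : Subgroup G, H.FiniteIndex ∧ ∀ a b : H, a * b = b * a)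
include hres hnva

theorem exists_commProb_quotient_le_five_eighths_mul (N : Subgroup G) [N.Normal]
    [N.FiniteIndex] : ∃ (N' : Subgroup G) (_ : N'.Normal),
      N'.FiniteIndex ∧ commProb (G ⧸ N') ≤ 5 / 8 * commProb (G ⧸ N) := by
  obtain ⟨a, b, hab⟩ : ∃ a b : N, a * b ≠ b * a := by
    by_contra! h
    exact hnva ⟨N, inferInstance, h⟩
  obtain ⟨M, _, _, hM⟩ :=
    hres ((a * b : G)⁻¹ * (b * a)) fun h => hab (Subtype.ext (inv_mul_eq_one.mp h))
  refine ⟨N ⊓ M, inferInstance, inferInstance, ?_⟩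
  calc commProb (G ⧸ N ⊓ M)
    _ ≤ commProb (N.map (QuotientGroup.mk' (N ⊓ M))) * commProb (G ⧸ N) :=
        commProb_quotient_le_commProb_map_mul inf_le_left
    _ ≤ 5 / 8 * commProb (G ⧸ N) := by
        gcongr
        · exact (commProb_pos _).le
        exact commProb_le_five_eighths
          (not_isMulCommutative_map_mk' a.2 b.2 fun h => hM (Subgroup.mem_inf.mp h).2)

theorem exists_commProb_quotient_le_pow (k : ℕ) :
    ∃ (N : Subgroup G) (_ : N.Normal), N.FiniteIndex ∧ commProb (G ⧸ N) ≤ (5 / 8) ^ k := by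
  induction k with
  | zero => exact ⟨⊤, inferInstance, inferInstance, by simpa using commProb_le_one _⟩
  | succ k ih =>
    obtain ⟨N, _, _, hN⟩ := ih
    obtain ⟨N', _, hN'fin, hN'⟩ := exists_commProb_quotient_le_five_eighths_mul hres hnva N
    exact ⟨N', _, hN'fin, hN'.trans (by rw [pow_succ']; gcongr)⟩

end ResiduallyFinite

theorem card_pairs_div_sq_le_one {α : Type*} (A : Set α) (r : α × α → Prop) :
    (Nat.card {p : α × α // p.1 ∈ A ∧ p.2 ∈ A ∧ r p} : ℝ) /
      (Nat.card A : ℝ) ^ 2 ≤ 1 := by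
  rcases finite_or_infinite A with hA | hA
  · refine div_le_one_of_le₀ ?_ (by positivity)
    have := Nat.card_le_card_of_injective
      (fun p : {p : α × α // p.1 ∈ A ∧ p.2 ∈ A ∧ r p} =>
        ((⟨p.1.1, p.2.1⟩ : A), (⟨p.1.2, p.2.2.1⟩ : A)))
      fun p q h => Subtype.ext <|
        Prod.ext (congrArg (fun s => (s.1 : α)) h) (congrArg (fun s => (s.2 : α)) h)
    rw [Nat.card_prod, ← sq] at this
    exact_mod_cast this
  · simp [Nat.card_eq_zero_of_infinite]

theorem dcX_nonneg {G : Type*} [Group G] (X : Finset G) : 0 ≤ dcX X :=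
  le_limsup_of_frequently_le (Frequently.of_forall fun _ => by positivity)
    (isBoundedUnder_of ⟨1, fun _ => card_pairs_div_sq_le_one _ _⟩)

theorem dcX_eq_zero_general (G : Type*) [Group G] (X : Finset G)
    (hres : ∀ g : G, g ≠ 1 → ∃ N : Subgroup G, N.Normal ∧ N.FiniteIndex ∧ g ∉ N)
    (hnva : ¬ ∃ H : Subgroup G, H.FiniteIndex ∧ ∀ a b : H, a * b = b * a)
    (hquot : ∀ N : Subgroup G, ∀ hN : N.Normal, N.FiniteIndex →
      letI := hN; dcX X ≤ (dc (G ⧸ N) : ℝ)) :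
    dcX X = 0 := by
  refine le_antisymm ?_ (dcX_nonneg X)
  refine ge_of_tendsto (tendsto_pow_atTop_nhds_zero_of_lt_one (r := (5 / 8 : ℝ))
    (by norm_num) (by norm_num)) (Eventually.of_forall fun k => ?_)
  obtain ⟨N, hN, hNfin, hNk⟩ := exists_commProb_quotient_le_pow hres hnva k
  calc dcX X ≤ (dc (G ⧸ N) : ℝ) := hquot N hN hNfin
    _ ≤ (5 / 8) ^ k := by simpa [dc_eq_commProb] using (Rat.cast_le (K := ℝ)).mpr hNk

/-- If `G` is a finitely generated residually finite group, not virtually abelian, and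
`dc_X(G) ≤ dc(G/N)` for every finite-index normal subgroup `N`, then `dc_X(G) = 0`. -/
theorem dcX_eq_zero (G : Type*) [Group G] (X : Finset G)
    (hX : Subgroup.closure (X : Set G) = ⊤)
    (hres : ∀ g : G, g ≠ 1 → ∃ N : Subgroup G, N.Normal ∧ N.FiniteIndex ∧ g ∉ N)
    (hnva : ¬ ∃ H : Subgroup G, H.FiniteIndex ∧ ∀ a b : H, a * b = b * a)
    (hquot : ∀ N : Subgroup G, ∀ hN : N.Normal, N.FiniteIndex →
      letI := hN; dcX X ≤ (dc (G ⧸ N) : ℝ)) :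
    dcX X = 0 :=
  dcX_eq_zero_general G X hres hnva hquot
end

section
/- Let G be a finitely generated group with finite generating set X, and suppose that for every finite-index normal subgroup N and every g ∈ G, lim_{n→∞} |gN ∩ B_X(n)| / |B_X(n)| = 1/[G:N]. Then for every finite-index normal subgroup N of G, dc_X(G) ≤ dc(G/N). -/
open Filter

/-! Commuting pairs of `G` map to commuting pairs of `G ⧸ N`, so the commuting proportion of
`B_X(n)²` is at most the proportion of `B_X(n)²` lying over commuting pairs of `G ⧸ N`. That
proportion is a finite sum of products of fiber proportions, which by equidistribution of cosets
tends to `#{commuting pairs of G ⧸ N} / [G:N]² = dc(G ⧸ N)`. -/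

open Finset

theorem ball_finite {G : Type*} [Group G] (X : Finset G) (n : ℕ) : (ball X n).Finite := by
  let T : Set G := {x | x ∈ X ∨ x⁻¹ ∈ X}
  have : Finite T := (X.finite_toSet.union X.finite_toSet.inv).subset fun _ h => h
  refine ((List.finite_length_le T n).image fun l => (l.map (↑)).prod).subset ?_
  rintro g ⟨l, hlen, hmem, rfl⟩
  lift l to List T using hmem
  exact ⟨l, by simpa using hlen, rfl⟩

theorem limsup_le_of_le_of_tendsto {α : Type*} {l : Filter α} [l.NeBot] {u v : α → ℝ}
    {L : ℝ} (hu : ∀ a, 0 ≤ u a) (huv : ∀ a, u a ≤ v a) (hv : Tendsto v l (nhds L)) :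
    limsup u l ≤ L :=
  hv.limsup_eq ▸ limsup_le_limsup (Eventually.of_forall huv)
    (isBoundedUnder_of ⟨0, hu⟩).isCoboundedUnder_le hv.isBoundedUnder_le

theorem natCard_subtype_eq_card {α : Type*} {p : α → Prop} (F : Finset α)
    (h : ∀ x, p x ↔ x ∈ F) : Nat.card {x // p x} = #F :=
  (Nat.card_congr (Equiv.subtypeEquivRight h)).trans (Nat.card_eq_finsetCard F)

theorem natCard_commuting_pairs_eq {G : Type*} [Group G] [DecidableEq G] {S : Set G}
    (hS : S.Finite) :
    Nat.card {p : G × G // p.1 ∈ S ∧ p.2 ∈ S ∧ p.1 * p.2 = p.2 * p.1} =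
      #{p ∈ hS.toFinset ×ˢ hS.toFinset | p.1 * p.2 = p.2 * p.1} :=
  natCard_subtype_eq_card _ fun p => by simp [and_assoc]

theorem natCard_coset_inter_eq {G : Type*} [Group G] {S : Set G} (hS : S.Finite)
    (N : Subgroup G) [DecidableEq (G ⧸ N)] (g : G) :
    Nat.card {x : G // g⁻¹ * x ∈ N ∧ x ∈ S} =
      #{x ∈ hS.toFinset | (QuotientGroup.mk x : G ⧸ N) = g} :=
  natCard_subtype_eq_card _ fun x => by simp [QuotientGroup.eq (s := N) (a := g), and_comm, eq_comm]

theorem dc_eq_card_div {Q : Type*} [Group Q] [Fintype Q] [DecidableEq Q] :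
    dc Q = #{c : Q × Q | c.1 * c.2 = c.2 * c.1} / (Fintype.card Q : ℚ) ^ 2 := by
  simp [dc, Nat.card_eq_fintype_card, Fintype.card_subtype]

theorem tendsto_sum_commuting_mul_dc {α Q : Type*} [Group Q] [Fintype Q] [DecidableEq Q]
    {l : Filter α} {r : Q → α → ℝ}
    (hr : ∀ a, Tendsto (r a) l (nhds (1 / Fintype.card Q))) :
    Tendsto (fun t => ∑ c : Q × Q with c.1 * c.2 = c.2 * c.1, r c.1 t * r c.2 t) l
      (nhds (dc Q : ℝ)) := by
  convert tendsto_finsetSum _ fun (c : Q × Q) _ => (hr c.1).mul (hr c.2) using 2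
  rw [dc_eq_card_div, sum_const, nsmul_eq_mul]
  push_cast
  ring

section CommutingPairs

variable {G Q : Type*} [Group G] [Group Q] [DecidableEq G] [DecidableEq Q] [Fintype Q]

theorem card_commuting_pairs_le_sum_fiber_card (f : G →* Q) (S : Finset G) :
    #{p ∈ S ×ˢ S | p.1 * p.2 = p.2 * p.1} ≤
      ∑ c : Q × Q with c.1 * c.2 = c.2 * c.1,
        #{x ∈ S | f x = c.1} * #{x ∈ S | f x = c.2} := by
  calc #{p ∈ S ×ˢ S | p.1 * p.2 = p.2 * p.1}
      ≤ #{p ∈ S ×ˢ S | f p.1 * f p.2 = f p.2 * f p.1} :=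
        card_le_card <| monotone_filter_right _ fun p _ h => by simp only [← map_mul, h]
    _ = ∑ c : Q × Q with c.1 * c.2 = c.2 * c.1,
          #{p ∈ S ×ˢ S | f p.1 * f p.2 = f p.2 * f p.1 ∧ (f p.1, f p.2) = c} := by
        rw [card_eq_sum_card_fiberwise (f := fun p => (f p.1, f p.2))
          (t := {c : Q × Q | c.1 * c.2 = c.2 * c.1})]
        · simp only [filter_filter]
        · intro p hp
          simp only [coe_filter] at hp
          simpa using hp.2
    _ = _ := by
        refine sum_congr rfl fun c hc => ?_
        rw [← card_product, ← filter_product]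
        congr 1
        refine filter_congr fun p _ => ?_
        simp only [mem_filter, mem_univ, true_and] at hc
        constructor
        · rintro ⟨-, h⟩; exact Prod.ext_iff.mp h
        · rintro ⟨h1, h2⟩; exact ⟨by rw [h1, h2, hc], Prod.ext h1 h2⟩

theorem commuting_ratio_le_sum_fiber_ratio (f : G →* Q) (S : Finset G) :
    (#{p ∈ S ×ˢ S | p.1 * p.2 = p.2 * p.1} : ℝ) / (#S : ℝ) ^ 2 ≤
      ∑ c : Q × Q with c.1 * c.2 = c.2 * c.1,
        (#{x ∈ S | f x = c.1} : ℝ) / #S * ((#{x ∈ S | f x = c.2} : ℝ) / #S) := by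
  simp_rw [div_mul_div_comm, ← sq, ← sum_div]
  gcongr
  exact_mod_cast card_commuting_pairs_le_sum_fiber_card f S

end CommutingPairs

theorem dcX_le_dc_quotient_general (G : Type*) [Group G] (X : Finset G)
    (hBV : ∀ N : Subgroup G, N.Normal → N.FiniteIndex → ∀ g : G,
      Tendsto (fun n =>
          (Nat.card {x : G // g⁻¹ * x ∈ N ∧ x ∈ ball X n} : ℝ) /
            (Nat.card (ball X n) : ℝ)) atTop (nhds (1 / (N.index : ℝ)))) :
    ∀ N : Subgroup G, ∀ hN : N.Normal, N.FiniteIndex →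
      letI := hN; dcX X ≤ (dc (G ⧸ N) : ℝ) := by
  intro N hN hfi
  classical
  let _ : Fintype (G ⧸ N) := Fintype.ofFinite _
  let B n := (ball_finite X n).toFinset
  have hfiber (a : G ⧸ N) :
      Tendsto (fun n => (#{x ∈ B n | QuotientGroup.mk' N x = a} : ℝ) / #(B n)) atTop
        (nhds (1 / Fintype.card (G ⧸ N))) := by
    rw [← Nat.card_eq_fintype_card, ← Subgroup.index_eq_card]
    convert hBV N hN hfi a.out using 3 with n
    · rw [natCard_coset_inter_eq (ball_finite X n), QuotientGroup.out_eq']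
      rfl
    · rw [Nat.card_eq_card_finite_toFinset (ball_finite X n)]
  refine limsup_le_of_le_of_tendsto (fun n => by positivity) (fun n => ?_)
    (tendsto_sum_commuting_mul_dc hfiber)
  rw [natCard_commuting_pairs_eq (ball_finite X n),
    Nat.card_eq_card_finite_toFinset (ball_finite X n)]
  exact commuting_ratio_le_sum_fiber_ratio (QuotientGroup.mk' N) (B n)

/-- If every coset of every finite-index normal subgroup is equidistributed in the
balls of `(G, X)`, then `dc_X(G) ≤ dc(G/N)` for every finite-index normal `N`. -/
theorem dcX_le_dc_quotient (G : Type*) [Group G] (X : Finset G)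
    (hX : Subgroup.closure (X : Set G) = ⊤)
    (hBV : ∀ N : Subgroup G, N.Normal → N.FiniteIndex → ∀ g : G,
      Tendsto (fun n =>
          (Nat.card {x : G // g⁻¹ * x ∈ N ∧ x ∈ ball X n} : ℝ) /
            (Nat.card (ball X n) : ℝ)) atTop (nhds (1 / (N.index : ℝ)))) :
    ∀ N : Subgroup G, ∀ hN : N.Normal, N.FiniteIndex →
      letI := hN; dcX X ≤ (dc (G ⧸ N) : ℝ) :=
  dcX_le_dc_quotient_general G X hBV
end

section
/- Let G be a finitely generated group with finite generating set X, and suppose there exist constants C, D > 0 and d ≥ 1 with Cn^d ≤ |B_X(n)| ≤ Dn^d for all n ≥ 1. Let f : G → ℕ satisfy f(u)/K ≤ |u|_X ≤ K·f(u) for all u ∈ G and some K > 0. Then dc_X(G) > 0 if and only if dc_f(G) > 0, where dc_f is defined using the balls B_f(n) = f⁻¹({0,…,n}). -/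
open Filter

/-- The word length of `g` with respect to `X`. -/
noncomputable def wlen {G : Type*} [Group G] (X : Finset G) (g : G) : ℕ :=
  sInf {n | g ∈ ball X n}

section Aux

open scoped Pointwise

variable {G : Type*} [Group G]

lemma aux_one_mem_ball (X : Finset G) (n : ℕ) : (1:G) ∈ ball X n :=
  ⟨[], by simp, by simp, by simp⟩

lemma aux_ball_mono (X : Finset G) {m n : ℕ} (h : m ≤ n) : ball X m ⊆ ball X n :=
  fun _ ⟨l, h1, h2, h3⟩ => ⟨l, h1.trans h, h2, h3⟩

lemma aux_ball_finite (X : Finset G) (n : ℕ) : (ball X n).Finite := by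
  induction n with
  | zero =>
    apply Set.Finite.subset (Set.finite_singleton (1:G))
    rintro g ⟨l, h1, -, h3⟩
    have hl : l = [] := List.length_eq_zero_iff.mp (Nat.le_zero.mp h1)
    simp [hl] at h3
    simp [← h3]
  | succ n ih =>
    have hS : ({x : G | x ∈ X ∨ x⁻¹ ∈ X}).Finite := by
      have he : {x : G | x ∈ X ∨ x⁻¹ ∈ X} = ↑X ∪ (↑X : Set G)⁻¹ := by
        ext x; simp [Set.mem_inv]
      rw [he]; exact X.finite_toSet.union X.finite_toSet.inv
    have hsub : ball X (n+1) ⊆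
        ⋃ x ∈ insert (1:G) {x : G | x ∈ X ∨ x⁻¹ ∈ X}, (fun g => x * g) '' ball X n := by
      rintro g ⟨l, h1, h2, h3⟩
      match l with
      | [] =>
        simp only [List.prod_nil] at h3
        exact Set.mem_biUnion (Set.mem_insert _ _)
          ⟨1, aux_one_mem_ball X n, by simp [← h3]⟩
      | x :: t =>
        refine Set.mem_biUnion (Set.mem_insert_of_mem _ (h2 x (by simp)))
          ⟨t.prod, ⟨t, by simpa using h1, fun y hy => h2 y (by simp [hy]), rfl⟩, by simpa using h3⟩
    exact Set.Finite.subset ((hS.insert 1).biUnion fun x _ => ih.image _) hsub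

lemma aux_mem_ball_iff (X : Finset G) (hX : Subgroup.closure (X : Set G) = ⊤) (g : G) (n : ℕ) :
    g ∈ ball X n ↔ wlen X g ≤ n := by
  constructor
  · exact fun h => Nat.sInf_le h
  · intro h
    have hg : g ∈ Submonoid.closure ((X : Set G) ∪ (X : Set G)⁻¹) := by
      rw [← Subgroup.closure_toSubmonoid, hX]; trivial
    obtain ⟨l, hl, hprod⟩ := Submonoid.exists_list_of_mem_closure hg
    have hne : {n | g ∈ ball X n}.Nonempty := by
      refine ⟨l.length, l, le_rfl, fun x hx => ?_, hprod⟩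
      rcases hl x hx with h' | h'
      · exact Or.inl (by simpa using h')
      · exact Or.inr (by simpa [Set.mem_inv] using h')
    exact aux_ball_mono X h (Nat.sInf_mem hne)

/-- Commuting pairs with both entries in `S`. -/
def comPairs (S : Set G) : Set (G × G) := {p | p.1 ∈ S ∧ p.2 ∈ S ∧ p.1 * p.2 = p.2 * p.1}

lemma comPairs_mono {S T : Set G} (h : S ⊆ T) : comPairs S ⊆ comPairs T :=
  fun _ ⟨h1, h2, h3⟩ => ⟨h h1, h h2, h3⟩

lemma comPairs_subset (S : Set G) : comPairs S ⊆ S ×ˢ S := fun _ ⟨h1, h2, _⟩ => ⟨h1, h2⟩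

lemma comPairs_finite {S : Set G} (h : S.Finite) : (comPairs S).Finite :=
  (h.prod h).subset (comPairs_subset S)

lemma card_comPairs_le_sq {S : Set G} (h : S.Finite) :
    (Nat.card (comPairs S) : ℝ) ≤ (Nat.card S : ℝ) ^ 2 := by
  have h1 := Nat.card_mono (h.prod h) (comPairs_subset S)
  have h2 : Nat.card ↥(S ×ˢ S) = Nat.card S * Nat.card S := by
    rw [Nat.card_congr (Equiv.Set.prod S S), Nat.card_prod]
  rw [h2] at h1
  have := (Nat.cast_le (α := ℝ)).2 h1
  push_cast at this
  nlinarith [this]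

end Aux

lemma aux_ratio_le {P Q x y t : ℝ} (hP : 0 ≤ P) (hPQ : P ≤ Q) (hx : 0 < x) (hy : 0 < y)
    (ht : 0 < t) (hxy : y ≤ t * x) : P / x ^ 2 ≤ t ^ 2 * (Q / y ^ 2) := by
  have hy2 : y ^ 2 ≤ t ^ 2 * x ^ 2 := by nlinarith
  have h1 : P / x ^ 2 ≤ (t ^ 2 * Q) / y ^ 2 := by
    rw [div_le_div_iff₀ (by positivity) (by positivity)]
    nlinarith [mul_le_mul hPQ hy2 (by positivity) (le_trans hP hPQ)]
  simpa [mul_div_assoc] using h1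

lemma aux_limsup_pos {a b : ℕ → ℝ} {c : ℝ} (hc : 0 < c) {φ : ℕ → ℕ}
    (hφ : Tendsto φ atTop atTop)
    (ha0 : ∀ n, 0 ≤ a n) (hb1 : ∀ n, b n ≤ 1)
    (h : ∀ᶠ n in atTop, a n ≤ c * b (φ n))
    (ha : 0 < limsup a atTop) : 0 < limsup b atTop := by
  have hbdd : IsCoboundedUnder (· ≤ ·) atTop a :=
    isCoboundedUnder_le_of_le atTop (x := 0) ha0
  have hfreq : ∃ᶠ n in atTop, limsup a atTop / 2 < a n :=
    frequently_lt_of_lt_limsup hbdd (by linarith)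
  have h2 : ∃ᶠ n in atTop, limsup a atTop / (2 * c) < b (φ n) := by
    refine (hfreq.and_eventually h).mono ?_
    rintro n ⟨h1, h2⟩
    rw [show limsup a atTop / (2 * c) = (limsup a atTop / 2) / c by ring, div_lt_iff₀ hc]
    nlinarith
  have h3 : ∃ᶠ m in atTop, limsup a atTop / (2 * c) < b m := hφ.frequently h2
  have h4 : limsup a atTop / (2 * c) ≤ limsup b atTop :=
    le_limsup_of_frequently_le (h3.mono fun _ h => h.le)
      (isBoundedUnder_of ⟨1, hb1⟩)
  have h5 : 0 < limsup a atTop / (2 * c) := by positivity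
  linarith

/-- The degree of commutativity of `G` computed with the balls `B_f(n) = f⁻¹({0,…,n})`
of a function `f : G → ℕ`. -/
noncomputable def dcf {G : Type*} [Group G] (f : G → ℕ) : ℝ :=
  limsup (fun n =>
    (Nat.card {p : G × G // f p.1 ≤ n ∧ f p.2 ≤ n ∧ p.1 * p.2 = p.2 * p.1} : ℝ) /
      (Nat.card {u : G // f u ≤ n} : ℝ) ^ 2) atTop

/-- For a group of exactly polynomial growth of degree `d`, and `f` an estimate of the
`X`-metric, `dc_X(G) > 0` iff `dc_f(G) > 0`. -/
theorem dcX_pos_iff_dcf_pos (G : Type*) [Group G] (X : Finset G)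
    (hX : Subgroup.closure (X : Set G) = ⊤)
    (C D : ℝ) (hC : 0 < C) (hD : 0 < D) (d : ℕ) (hd : 1 ≤ d)
    (hgrowth : ∀ n : ℕ, 1 ≤ n →
      C * (n : ℝ) ^ d ≤ (Nat.card (ball X n) : ℝ) ∧
        (Nat.card (ball X n) : ℝ) ≤ D * (n : ℝ) ^ d)
    (f : G → ℕ) (K : ℝ) (hK : 0 < K)
    (hf : ∀ u : G, (f u : ℝ) / K ≤ (wlen X u : ℝ) ∧ (wlen X u : ℝ) ≤ K * (f u : ℝ)) :
    0 < dcX X ↔ 0 < dcf f := by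
  classical
  -- the integer constant
  set K' : ℕ := max ⌈K⌉₊ 1 with hK'def
  have hK'1 : 1 ≤ K' := le_max_right _ _
  have hK'0 : 0 < K' := hK'1
  have hK'R : (1:ℝ) ≤ (K' : ℝ) := by exact_mod_cast hK'1
  have hKK' : K ≤ (K' : ℝ) := by
    refine le_trans (Nat.le_ceil K) ?_
    exact_mod_cast le_max_left ⌈K⌉₊ 1
  -- the two families of balls
  have hballfin : ∀ n : ℕ, (ball X n).Finite := aux_ball_finite X
  have hBf_sub : ∀ n : ℕ, {u : G | f u ≤ n} ⊆ ball X (K' * n) := by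
    intro n u hu
    have h1 := (hf u).2
    have hfn : (f u : ℝ) ≤ (n : ℝ) := by exact_mod_cast hu
    have hw : (wlen X u : ℝ) ≤ ((K' * n : ℕ) : ℝ) := by
      push_cast
      calc (wlen X u : ℝ) ≤ K * (f u : ℝ) := h1
        _ ≤ (K' : ℝ) * (n : ℝ) := by
            have h0 : (0:ℝ) ≤ (f u : ℝ) := (f u).cast_nonneg
            nlinarith
    exact (aux_mem_ball_iff X hX u (K' * n)).2 (by exact_mod_cast hw)
  have hball_sub : ∀ n : ℕ, ball X n ⊆ {u : G | f u ≤ K' * n} := by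
    intro n u hu
    have hw : wlen X u ≤ n := (aux_mem_ball_iff X hX u n).1 hu
    have h1 := (hf u).1
    have h2 : (f u : ℝ) ≤ K * (wlen X u : ℝ) := by
      rw [div_le_iff₀ hK] at h1; linarith
    have hwn : (wlen X u : ℝ) ≤ (n : ℝ) := by exact_mod_cast hw
    have h3 : (f u : ℝ) ≤ ((K' * n : ℕ) : ℝ) := by
      push_cast
      have h0 : (0:ℝ) ≤ (wlen X u : ℝ) := (wlen X u).cast_nonneg
      nlinarith
    exact_mod_cast h3
  have hBffin : ∀ n : ℕ, ({u : G | f u ≤ n}).Finite :=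
    fun n => (hballfin _).subset (hBf_sub n)
  -- nonemptiness
  have hf1 : f 1 = 0 := by
    have hw1 : wlen X (1:G) = 0 :=
      Nat.le_zero.mp (Nat.sInf_le (aux_one_mem_ball X 0))
    have := (hf 1).1
    rw [hw1] at this
    have h2 : (f 1 : ℝ) ≤ 0 := by
      rw [div_le_iff₀ hK] at this; simpa using this
    exact_mod_cast le_antisymm (by exact_mod_cast h2) (Nat.zero_le _)
  -- cardinalities: positivity
  have hcX : ∀ n : ℕ, 0 < (Nat.card (ball X n) : ℝ) := by
    intro n
    have := (hballfin n).to_subtype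
    have hne : Nonempty (ball X n) := ⟨⟨1, aux_one_mem_ball X n⟩⟩
    exact_mod_cast Nat.card_pos
  have hcf : ∀ n : ℕ, 0 < (Nat.card {u : G // f u ≤ n} : ℝ) := by
    intro n
    haveI : Finite {u : G // f u ≤ n} := (hBffin n).to_subtype
    haveI : Nonempty {u : G // f u ≤ n} := ⟨⟨1, by simp [hf1]⟩⟩
    exact_mod_cast Nat.card_pos (α := {u : G // f u ≤ n})
  -- identify with comPairs cards
  have hPX : ∀ n : ℕ,
      (Nat.card {p : G × G // p.1 ∈ ball X n ∧ p.2 ∈ ball X n ∧ p.1 * p.2 = p.2 * p.1}) =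
        Nat.card (comPairs (ball X n)) := fun n => rfl
  have hPf : ∀ n : ℕ,
      (Nat.card {p : G × G // f p.1 ≤ n ∧ f p.2 ≤ n ∧ p.1 * p.2 = p.2 * p.1}) =
        Nat.card (comPairs {u : G | f u ≤ n}) := fun n => rfl
  have hcf' : ∀ n : ℕ, (Nat.card {u : G // f u ≤ n}) = Nat.card ↥{u : G | f u ≤ n} :=
    fun n => rfl
  -- the two sequences
  set aX : ℕ → ℝ := fun n =>
    (Nat.card {p : G × G // p.1 ∈ ball X n ∧ p.2 ∈ ball X n ∧ p.1 * p.2 = p.2 * p.1} : ℝ) /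
      (Nat.card (ball X n) : ℝ) ^ 2 with haXdef
  set af : ℕ → ℝ := fun n =>
    (Nat.card {p : G × G // f p.1 ≤ n ∧ f p.2 ≤ n ∧ p.1 * p.2 = p.2 * p.1} : ℝ) /
      (Nat.card {u : G // f u ≤ n} : ℝ) ^ 2 with hafdef
  have hdX : dcX X = limsup aX atTop := rfl
  have hdf : dcf f = limsup af atTop := rfl
  -- boundedness of the sequences
  have haX0 : ∀ n, 0 ≤ aX n := fun n => by positivity
  have haf0 : ∀ n, 0 ≤ af n := fun n => by positivity
  have haX1 : ∀ n, aX n ≤ 1 := by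
    intro n
    rw [haXdef]
    simp only
    rw [div_le_one (pow_pos (hcX n) 2)]
    rw [hPX n]
    exact card_comPairs_le_sq (hballfin n)
  have haf1 : ∀ n, af n ≤ 1 := by
    intro n
    rw [hafdef]
    simp only
    rw [div_le_one (pow_pos (hcf n) 2)]
    rw [hPf n, hcf' n]
    exact card_comPairs_le_sq (hBffin n)
  -- first inequality : aX n ≤ t₁^2 * af (K' * n) for n ≥ 1
  set t₁ : ℝ := D * ((K' : ℝ) ^ d) ^ 2 / C with ht₁def
  have ht₁ : 0 < t₁ := by positivity
  have hineq1 : ∀ n : ℕ, 1 ≤ n → aX n ≤ t₁ ^ 2 * af (K' * n) := by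
    intro n hn
    rw [haXdef, hafdef]
    simp only
    rw [hPX n, hPf (K' * n), hcf' (K' * n)]
    refine aux_ratio_le (by positivity) ?_ (hcX n) ?_ ht₁ ?_
    · -- commuting pairs increase
      exact_mod_cast Nat.card_mono (comPairs_finite (hBffin (K' * n)))
        (comPairs_mono (hball_sub n))
    · exact_mod_cast hcf (K' * n)
    · -- cf (K'*n) ≤ t₁ * cX n
      have hs1 : (Nat.card ↥{u : G | f u ≤ K' * n} : ℝ) ≤
          (Nat.card (ball X (K' * (K' * n))) : ℝ) := by
        exact_mod_cast Nat.card_mono (hballfin _) (hBf_sub (K' * n))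
      have hn1 : 1 ≤ K' * (K' * n) := by
        have := Nat.mul_le_mul hK'1 (Nat.mul_le_mul hK'1 hn)
        simpa using this
      have hs2 := (hgrowth (K' * (K' * n)) hn1).2
      have hs3 := (hgrowth n hn).1
      have hcast : ((K' * (K' * n) : ℕ) : ℝ) ^ d =
          ((K' : ℝ) ^ d) ^ 2 * (n : ℝ) ^ d := by
        push_cast
        rw [mul_pow, mul_pow]
        ring
      calc (Nat.card ↥{u : G | f u ≤ K' * n} : ℝ)
          ≤ (Nat.card (ball X (K' * (K' * n))) : ℝ) := hs1
        _ ≤ D * ((K' : ℝ) ^ d) ^ 2 * (n : ℝ) ^ d := by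
            rw [hcast] at hs2; linarith
        _ ≤ t₁ * (Nat.card (ball X n) : ℝ) := by
            rw [ht₁def]
            calc D * ((K' : ℝ) ^ d) ^ 2 * (n : ℝ) ^ d
                = (D * ((K' : ℝ) ^ d) ^ 2 / C) * (C * (n : ℝ) ^ d) := by
                  field_simp
                _ ≤ (D * ((K' : ℝ) ^ d) ^ 2 / C) * (Nat.card (ball X n) : ℝ) := by
                  have h1 : (0:ℝ) ≤ D * ((K' : ℝ) ^ d) ^ 2 / C := by positivity
                  exact mul_le_mul_of_nonneg_left hs3 h1
  -- second inequality : af n ≤ t₂^2 * aX (K' * n) for n ≥ 2 * K'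
  set t₂ : ℝ := D * (K' : ℝ) ^ d * (2 * (K' : ℝ)) ^ d / C with ht₂def
  have ht₂ : 0 < t₂ := by positivity
  have hineq2 : ∀ n : ℕ, 2 * K' ≤ n → af n ≤ t₂ ^ 2 * aX (K' * n) := by
    intro n hn
    have hn1 : 1 ≤ n := le_trans (by omega) hn
    rw [haXdef, hafdef]
    simp only
    rw [hPX (K' * n), hPf n, hcf' n]
    refine aux_ratio_le (by positivity) ?_ ?_ (hcX (K' * n)) ht₂ ?_
    · exact_mod_cast Nat.card_mono (comPairs_finite (hballfin (K' * n)))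
        (comPairs_mono (hBf_sub n))
    · exact_mod_cast hcf n
    · -- cX (K'*n) ≤ t₂ * cf n
      set m : ℕ := n / K' with hmdef
      have hm1 : 1 ≤ m := by
        rw [hmdef]
        exact (Nat.one_le_div_iff hK'0).2 (by omega)
      -- ball X m ⊆ B_f n
      have hKm : K' * m ≤ n := by
        rw [hmdef, mul_comm]; exact Nat.div_mul_le_self n K'
      have hsub : ball X m ⊆ {u : G | f u ≤ n} := by
        refine subset_trans (hball_sub m) ?_
        intro u hu
        exact le_trans hu hKm
      have hs1 : (Nat.card (ball X m) : ℝ) ≤ (Nat.card ↥{u : G | f u ≤ n} : ℝ) := by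
        exact_mod_cast Nat.card_mono (hBffin n) hsub
      have hs2 := (hgrowth m hm1).1
      have hs3 := (hgrowth (K' * n) (by nlinarith)).2
      -- n ≤ 2 K' m
      have hnm : (n : ℝ) ≤ 2 * (K' : ℝ) * (m : ℝ) := by
        have e1 : ((K' * m + n % K' : ℕ) : ℝ) = (n : ℝ) := by
          exact_mod_cast congrArg (Nat.cast (R := ℝ)) (Nat.div_add_mod n K')
        push_cast at e1
        have e2 : ((n % K' : ℕ) : ℝ) < (K' : ℝ) := by
          exact_mod_cast Nat.mod_lt n hK'0
        have e3 : (K' : ℝ) ≤ (K' : ℝ) * (m : ℝ) := by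
          have : K' ≤ K' * m := Nat.le_mul_of_pos_right K' hm1
          exact_mod_cast this
        linarith
      have hmlb : (n : ℝ) / (2 * (K' : ℝ)) ≤ (m : ℝ) := by
        rw [div_le_iff₀ (by positivity)]
        linarith
      have hpow : ((n : ℝ) / (2 * (K' : ℝ))) ^ d ≤ (m : ℝ) ^ d :=
        pow_le_pow_left₀ (by positivity) hmlb d
      have hcfl : C * ((n : ℝ) / (2 * (K' : ℝ))) ^ d ≤ (Nat.card ↥{u : G | f u ≤ n} : ℝ) := by
        calc C * ((n : ℝ) / (2 * (K' : ℝ))) ^ d ≤ C * (m : ℝ) ^ d := by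
              exact mul_le_mul_of_nonneg_left hpow hC.le
          _ ≤ (Nat.card (ball X m) : ℝ) := hs2
          _ ≤ _ := hs1
      have hkey : t₂ * (C * ((n : ℝ) / (2 * (K' : ℝ))) ^ d) =
          D * (K' : ℝ) ^ d * (n : ℝ) ^ d := by
        rw [ht₂def, div_pow]
        have h2K : ((2 : ℝ) * (K' : ℝ)) ^ d ≠ 0 := by positivity
        field_simp
      have hcXu : (Nat.card (ball X (K' * n)) : ℝ) ≤ D * (K' : ℝ) ^ d * (n : ℝ) ^ d := by
        have hcast : ((K' * n : ℕ) : ℝ) ^ d = (K' : ℝ) ^ d * (n : ℝ) ^ d := by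
          push_cast; rw [mul_pow]
        rw [hcast] at hs3; linarith
      calc (Nat.card (ball X (K' * n)) : ℝ)
          ≤ D * (K' : ℝ) ^ d * (n : ℝ) ^ d := hcXu
        _ = t₂ * (C * ((n : ℝ) / (2 * (K' : ℝ))) ^ d) := hkey.symm
        _ ≤ t₂ * (Nat.card ↥{u : G | f u ≤ n} : ℝ) :=
            mul_le_mul_of_nonneg_left hcfl ht₂.le
  -- tendsto of n ↦ K' * n
  have hφ : Tendsto (fun n => K' * n) atTop atTop :=
    tendsto_atTop_mono (fun n => Nat.le_mul_of_pos_left n hK'0) tendsto_id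
  rw [hdX, hdf]
  constructor
  · intro h
    exact aux_limsup_pos (by positivity : (0:ℝ) < t₁ ^ 2) hφ haX0 haf1
      (eventually_atTop.2 ⟨1, hineq1⟩) h
  · intro h
    exact aux_limsup_pos (by positivity : (0:ℝ) < t₂ ^ 2) hφ haf0 haX1
      (eventually_atTop.2 ⟨2 * K', hineq2⟩) h
end

section
/- Let G be a finitely generated group with finite generating set X, and let H ≤ G be a subgroup of finite index d. Suppose lim_{n→∞} |H ∩ B_X(n)|/|B_X(n)| = 1/d. Then dc_X(G) ≥ dc_X(H)/d², where dc_X(H) = limsup_n |{(u,v) ∈ (H ∩ B_X(n))² : uv = vu}|/|H ∩ B_X(n)|². -/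
open Filter

/-- The degree of commutativity of a subgroup `H` of `G`, measured with the balls of
`(G, X)` intersected with `H`. -/
noncomputable def dcXH {G : Type*} [Group G] (X : Finset G) (H : Subgroup G) : ℝ :=
  limsup (fun n =>
    (Nat.card {p : G × G // p.1 ∈ H ∧ p.1 ∈ ball X n ∧ p.2 ∈ H ∧ p.2 ∈ ball X n ∧
        p.1 * p.2 = p.2 * p.1} : ℝ) /
      (Nat.card {u : G // u ∈ H ∧ u ∈ ball X n} : ℝ) ^ 2) atTop

/-! Every commuting pair in `H ∩ B_X(n)` is a commuting pair in `B_X(n)`, so the commuting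
ratio of `B_X(n)` is at least that of `H ∩ B_X(n)` times the square of the density
`|H ∩ B_X(n)| / |B_X(n)|`. Passing to the limsup, that density tends to `1/d`. -/

open Topology

section CommutingPairs

variable {G : Type*} [Mul G]

def commPairs (A : Set G) : Set (G × G) := {p | p.1 ∈ A ∧ p.2 ∈ A ∧ p.1 * p.2 = p.2 * p.1}

-- For infinite `A` the junk value `Nat.card A = 0` makes the ratio `0`.
noncomputable def commRatio (A : Set G) : ℝ := Nat.card (commPairs A) / (Nat.card A : ℝ) ^ 2

lemma commPairs_subset_prod (A : Set G) : commPairs A ⊆ A ×ˢ A := fun _ hp => ⟨hp.1, hp.2.1⟩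

lemma commPairs_mono {A B : Set G} (h : A ⊆ B) : commPairs A ⊆ commPairs B :=
  fun _ hp => ⟨h hp.1, h hp.2.1, hp.2.2⟩

lemma card_commPairs_le_sq {A : Set G} (hA : A.Finite) : Nat.card (commPairs A) ≤ Nat.card A ^ 2 :=
  calc Nat.card (commPairs A) ≤ Nat.card (A ×ˢ A) :=
        Nat.card_mono (hA.prod hA) (commPairs_subset_prod A)
    _ = Nat.card A ^ 2 := by rw [Nat.card_congr (Equiv.Set.prod A A), Nat.card_prod, sq]

lemma commRatio_nonneg (A : Set G) : 0 ≤ commRatio A := by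
  unfold commRatio; positivity

lemma commRatio_le_one (A : Set G) : commRatio A ≤ 1 := by
  rcases A.finite_or_infinite with hA | hA
  · exact div_le_one_of_le₀ (by exact_mod_cast card_commPairs_le_sq hA) (by positivity)
  · have := hA.to_subtype
    simp [commRatio, Nat.card_eq_zero_of_infinite]

lemma commRatio_mul_density_sq_le {A B : Set G} (hAB : A ⊆ B) :
    commRatio A * ((Nat.card A : ℝ) / Nat.card B) ^ 2 ≤ commRatio B := by
  rcases B.finite_or_infinite with hB | hB
  · have hpairs : (Nat.card (commPairs A) : ℝ) ≤ Nat.card (commPairs B) := by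
      exact_mod_cast Nat.card_mono ((hB.prod hB).subset (commPairs_subset_prod B))
        (commPairs_mono hAB)
    calc commRatio A * ((Nat.card A : ℝ) / Nat.card B) ^ 2
        ≤ Nat.card (commPairs A) / (Nat.card B : ℝ) ^ 2 := by
          rcases eq_or_ne (Nat.card A) 0 with hA | hA
          · rw [hA, Nat.cast_zero, zero_div, zero_pow two_ne_zero, mul_zero]; positivity
          · rw [commRatio, div_pow, div_mul_div_cancel₀ (by positivity)]
      _ ≤ commRatio B := by unfold commRatio; gcongr
  · have := hB.to_subtype
    simp [commRatio, Nat.card_eq_zero_of_infinite]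

end CommutingPairs

lemma limsup_mul_le_limsup_of_tendsto {ι : Type*} {f : Filter ι} [f.NeBot] {u v w : ι → ℝ}
    {c : ℝ} (hu0 : 0 ≤ᶠ[f] u) (hu : IsBoundedUnder (· ≤ ·) f u) (hv0 : 0 ≤ᶠ[f] v)
    (hv : Tendsto v f (𝓝 c)) (hw : IsBoundedUnder (· ≤ ·) f w) (huvw : u * v ≤ᶠ[f] w) :
    limsup u f * c ≤ limsup w f := by
  have huv0 : 0 ≤ᶠ[f] u * v := (hu0.and hv0).mono fun _ h => mul_nonneg h.1 h.2
  calc limsup u f * c = limsup u f * liminf v f := by rw [hv.liminf_eq]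
    _ ≤ limsup (u * v) f := le_limsup_mul hu0.frequently hu hv0 hv.isBoundedUnder_le
    _ ≤ limsup w f :=
        limsup_le_limsup huvw (isBoundedUnder_of_eventually_ge huv0).isCoboundedUnder_le hw

lemma dcX_eq_limsup_commRatio {G : Type*} [Group G] (X : Finset G) :
    dcX X = limsup (fun n => commRatio (ball X n)) atTop := rfl

lemma dcXH_eq_limsup_commRatio {G : Type*} [Group G] (X : Finset G) (H : Subgroup G) :
    dcXH X H = limsup (fun n => commRatio ((H : Set G) ∩ ball X n)) atTop := by
  unfold dcXH commRatio
  congr! 4 with n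
  exact Nat.card_congr (Equiv.subtypeEquivRight fun p => by simp [commPairs, and_assoc])

theorem dcX_ge_dcXH_div_index_sq_general (G : Type*) [Group G] (X : Finset G)
    (H : Subgroup G)
    (hBV : Tendsto (fun n =>
        (Nat.card {u : G // u ∈ H ∧ u ∈ ball X n} : ℝ) / (Nat.card (ball X n) : ℝ))
      atTop (nhds (1 / (H.index : ℝ)))) :
    dcX X ≥ dcXH X H / (H.index : ℝ) ^ 2 := by
  have hbdd : ∀ A : ℕ → Set G, IsBoundedUnder (· ≤ ·) atTop fun n => commRatio (A n) :=
    fun A => isBoundedUnder_of ⟨1, fun n => commRatio_le_one (A n)⟩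
  rw [ge_iff_le, dcX_eq_limsup_commRatio, dcXH_eq_limsup_commRatio, div_eq_mul_one_div,
    ← one_div_pow]
  exact limsup_mul_le_limsup_of_tendsto (.of_forall fun n => commRatio_nonneg _) (hbdd _)
    (.of_forall fun n => by positivity) (hBV.pow 2) (hbdd _)
    (.of_forall fun n => commRatio_mul_density_sq_le Set.inter_subset_right)

/-- If a finite-index subgroup `H ≤ G` of index `d` is equidistributed in the balls of
`(G, X)`, then `dc_X(G) ≥ dc_X(H) / d²`. -/
theorem dcX_ge_dcXH_div_index_sq (G : Type*) [Group G] (X : Finset G)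
    (hX : Subgroup.closure (X : Set G) = ⊤)
    (H : Subgroup G) (hfi : H.FiniteIndex)
    (hBV : Tendsto (fun n =>
        (Nat.card {u : G // u ∈ H ∧ u ∈ ball X n} : ℝ) / (Nat.card (ball X n) : ℝ))
      atTop (nhds (1 / (H.index : ℝ)))) :
    dcX X ≥ dcXH X H / (H.index : ℝ) ^ 2 :=
  dcX_ge_dcXH_div_index_sq_general G X H hBV
end

section
/- In the free group F_p of rank p ≥ 2 with free basis X, letting N be the subgroup of elements of even word length, one has limsup_{n→∞} |N ∩ B_X(n)|/|B_X(n)| = (2p−2)(2p−1)/((2p−1)²−1), which is different from 1/2 = 1/[F_p : N]. -/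
/-!
Reduced words of length `k ≥ 1` number `2p(2p-1)^(k-1)`, so with `q = 2p - 1` the ball of
radius `n` has `((q+1)q^n - 2)/(q-1)` elements, of which `(q^(2⌊n/2⌋+1) - 1)/(q-1)` have even
length. The proportion therefore tends to `q/(q+1)` along even radii and to `1/(q+1)` along odd
ones, so its limsup is `q/(q+1) = (2p-2)(2p-1)/((2p-1)²-1)`, which is not `1/2` since `q ≠ 1`.
-/

open Filter Finset Topology

theorem tendsto_mul_sub_div_mul_sub_atTop {𝕜 : Type*} [Field 𝕜] [LinearOrder 𝕜]
    [IsStrictOrderedRing 𝕜] [TopologicalSpace 𝕜] [OrderTopology 𝕜] {a b x y : 𝕜} (hb : b ≠ 0) :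
    Tendsto (fun t => (a * t - x) / (b * t - y)) atTop (𝓝 (a / b)) := by
  have hlim : Tendsto (fun t : 𝕜 => (a - x * t⁻¹) / (b - y * t⁻¹)) atTop
      (𝓝 ((a - x * 0) / (b - y * 0))) :=
    (tendsto_const_nhds.sub (tendsto_inv_atTop_zero.const_mul x)).div
      (tendsto_const_nhds.sub (tendsto_inv_atTop_zero.const_mul y)) (by simpa using hb)
  simp only [mul_zero, sub_zero] at hlim
  refine hlim.congr' <| (eventually_gt_atTop 0).mono fun t ht => ?_
  rw [← mul_div_mul_right _ _ ht.ne']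
  congr 1 <;> field_simp

theorem limsup_eq_of_tendsto_even_of_tendsto_odd {β : Type*} [ConditionallyCompleteLinearOrder β]
    [TopologicalSpace β] [OrderTopology β] [DenselyOrdered β] [NoMaxOrder β] [NoMinOrder β]
    {u : ℕ → β} {a b : β} (ha : Tendsto (fun m => u (2 * m)) atTop (𝓝 a))
    (hb : Tendsto (fun m => u (2 * m + 1)) atTop (𝓝 b)) (hba : b ≤ a) :
    limsup u atTop = a := by
  have hlt : ∀ y > a, ∀ᶠ n in atTop, u n < y := by
    intro y hy
    obtain ⟨N, hN⟩ := eventually_atTop.1 (ha.eventually (gt_mem_nhds hy))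
    obtain ⟨M, hM⟩ := eventually_atTop.1 (hb.eventually (gt_mem_nhds (hba.trans_lt hy)))
    refine eventually_atTop.2 ⟨2 * (N + M), fun n hn => ?_⟩
    obtain ⟨m, rfl | rfl⟩ := Nat.even_or_odd' n
    exacts [hN m (by omega), hM m (by omega)]
  have hgt : ∀ y < a, ∃ᶠ n in atTop, y < u n := fun y hy =>
    (strictMono_mul_left_of_pos two_pos).tendsto_atTop.frequently
      (ha.eventually (lt_mem_nhds hy)).frequently
  obtain ⟨y, hy⟩ := exists_gt a
  obtain ⟨z, hz⟩ := exists_lt a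
  have hbdd : IsBoundedUnder (· ≤ ·) atTop u :=
    isBoundedUnder_of_eventually_le ((hlt y hy).mono fun _ => le_of_lt)
  have hcobdd : IsCoboundedUnder (· ≤ ·) atTop u :=
    IsCoboundedUnder.of_frequently_ge ((hgt z hz).mono fun _ => le_of_lt)
  exact le_antisymm ((limsup_le_iff hcobdd hbdd).2 hlt) ((le_limsup_iff hcobdd hbdd).2 hgt)

namespace FreeGroup

variable {α : Type*}

theorem isReduced_cons {a : α × Bool} {L : List (α × Bool)} :
    IsReduced (a :: L) ↔ (∀ b ∈ L.head?, a.1 = b.1 → a.2 = b.2) ∧ IsReduced L :=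
  List.isChain_cons

variable [DecidableEq α]

def equivIsReduced : FreeGroup α ≃ {L : List (α × Bool) // IsReduced L} where
  toFun w := ⟨w.toWord, isReduced_toWord⟩
  invFun L := mk L
  left_inv _ := mk_toWord
  right_inv L := Subtype.ext <| by simp [L.2.reduce_eq]

variable [Fintype α]

variable (α) in
def reducedWords : ℕ → Finset (List (α × Bool))
  | 0 => {[]}
  | n + 1 => (reducedWords n).biUnion fun L =>
      ({a | ∀ b ∈ L.head?, a.1 = b.1 → a.2 = b.2} : Finset _).image (· :: L)

theorem mem_reducedWords {L : List (α × Bool)} {n : ℕ} :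
    L ∈ reducedWords α n ↔ IsReduced L ∧ L.length = n := by
  induction n generalizing L with
  | zero => simp +contextual [reducedWords, List.length_eq_zero_iff]
  | succ n ih =>
    cases L with
    | nil => simp [reducedWords]
    | cons a L =>
      simp only [reducedWords, mem_biUnion, mem_image, mem_filter, mem_univ, true_and,
        List.cons.injEq, ih, isReduced_cons, List.length_cons, Nat.add_right_cancel_iff]
      constructor
      · rintro ⟨M, ⟨hM, rfl⟩, a, ha, rfl, rfl⟩
        exact ⟨⟨ha, hM⟩, rfl⟩
      · rintro ⟨⟨ha, hL⟩, rfl⟩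
        exact ⟨L, ⟨hL, rfl⟩, a, ha, rfl, rfl⟩

theorem card_filter_isReduced_pair (b : α × Bool) :
    #{a : α × Bool | a.1 = b.1 → a.2 = b.2} = 2 * Fintype.card α - 1 := by
  have : ({a : α × Bool | a.1 = b.1 → a.2 = b.2} : Finset _) = univ.erase (b.1, !b.2) := by
    ext ⟨x, s⟩
    obtain ⟨y, t⟩ := b
    by_cases hxy : x = y <;> cases s <;> cases t <;> simp [hxy]
  rw [this, card_erase_of_mem (mem_univ _), card_univ, Fintype.card_prod, Fintype.card_bool,
    mul_comm]

theorem card_reducedWords_succ_eq_sum (n : ℕ) :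
    #(reducedWords α (n + 1)) =
      ∑ L ∈ reducedWords α n, #{a : α × Bool | ∀ b ∈ L.head?, a.1 = b.1 → a.2 = b.2} := by
  rw [reducedWords, card_biUnion]
  · exact sum_congr rfl fun L _ => card_image_of_injective _ fun _ _ h => (List.cons_eq_cons.1 h).1
  · intro L _ M _ hLM
    simp only [Function.onFun, disjoint_left, mem_image]
    rintro _ ⟨a, -, rfl⟩ ⟨b, -, h⟩
    exact hLM (List.cons_eq_cons.1 h).2.symm

theorem card_reducedWords_succ (n : ℕ) :
    #(reducedWords α (n + 1)) = 2 * Fintype.card α * (2 * Fintype.card α - 1) ^ n := by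
  induction n with
  | zero =>
    rw [card_reducedWords_succ_eq_sum]
    simp [reducedWords, Fintype.card_prod, mul_comm]
  | succ n ih =>
    rw [card_reducedWords_succ_eq_sum, sum_congr rfl fun L hL => ?_, sum_const, smul_eq_mul, ih,
      pow_succ, mul_assoc]
    obtain ⟨hL, hlen⟩ := mem_reducedWords.1 hL
    obtain ⟨b, M, rfl⟩ := List.exists_cons_of_length_eq_add_one hlen
    simpa using card_filter_isReduced_pair b

theorem pairwiseDisjoint_reducedWords (s : Set ℕ) : s.PairwiseDisjoint (reducedWords α) :=
  fun _ _ _ _ hkl => disjoint_left.2 fun _ hk hl =>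
    hkl ((mem_reducedWords.1 hk).2.symm.trans (mem_reducedWords.1 hl).2)

theorem natCard_norm_mem (s : Finset ℕ) :
    Nat.card {w : FreeGroup α // norm w ∈ s} = ∑ k ∈ s, #(reducedWords α k) := by
  rw [← card_biUnion (pairwiseDisjoint_reducedWords _), ← Nat.card_eq_finsetCard]
  refine Nat.card_congr <| (equivIsReduced.subtypeEquiv fun _ => Iff.rfl).trans <|
    (Equiv.subtypeSubtypeEquivSubtypeInter _ fun L => L.length ∈ s).trans <|
      Equiv.subtypeEquivRight fun L => ?_
  simp [mem_reducedWords, and_comm]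

variable (α) in
noncomputable def growthRate : ℝ := 2 * Fintype.card α - 1

omit [DecidableEq α] in
theorem one_lt_growthRate [Nontrivial α] : 1 < growthRate α := by
  have : (1 : ℝ) < Fintype.card α := by exact_mod_cast Fintype.one_lt_card
  rw [growthRate]
  linarith

theorem cast_card_reducedWords_succ [Nonempty α] (k : ℕ) :
    (#(reducedWords α (k + 1)) : ℝ) = (growthRate α + 1) * growthRate α ^ k := by
  rw [card_reducedWords_succ, growthRate]
  push_cast [Nat.cast_sub (by linarith [Fintype.card_pos (α := α)] : 1 ≤ 2 * Fintype.card α)]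
  ring

theorem growthRate_sub_one_mul_natCard_norm_le [Nonempty α] (n : ℕ) :
    (growthRate α - 1) * Nat.card {w : FreeGroup α // norm w ≤ n} =
      (growthRate α + 1) * growthRate α ^ n - 2 := by
  set q := growthRate α
  have hball : Nat.card {w : FreeGroup α // norm w ≤ n} =
      Nat.card {w : FreeGroup α // norm w ∈ range (n + 1)} :=
    Nat.card_congr <| Equiv.subtypeEquivRight fun w => by simp
  rw [hball, natCard_norm_mem, Nat.cast_sum, sum_range_succ']
  simp only [cast_card_reducedWords_succ, ← mul_sum]
  linear_combination (q + 1) * geom_sum_mul q n + (q - 1) * (by simp [reducedWords] :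
    ((#(reducedWords α 0) : ℕ) : ℝ) = 1)

theorem growthRate_sub_one_mul_natCard_even_norm_le [Nonempty α] (n : ℕ) :
    (growthRate α - 1) * Nat.card {w : FreeGroup α // Even (norm w) ∧ norm w ≤ n} =
      growthRate α ^ (2 * (n / 2) + 1) - 1 := by
  set q := growthRate α
  have hevenBall : Nat.card {w : FreeGroup α // Even (norm w) ∧ norm w ≤ n} =
      Nat.card {w : FreeGroup α // norm w ∈ (range (n / 2 + 1)).image (2 * ·)} := by
    refine Nat.card_congr <| Equiv.subtypeEquivRight fun w => ?_
    simp only [mem_image, mem_range]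
    constructor
    · rintro ⟨⟨j, hj⟩, hn⟩
      exact ⟨j, by omega, by omega⟩
    · rintro ⟨j, hj, hw⟩
      exact ⟨⟨j, by omega⟩, by omega⟩
  have hsphere (j : ℕ) : (#(reducedWords α (2 * (j + 1))) : ℝ) = (q + 1) * q * (q ^ 2) ^ j := by
    rw [show 2 * (j + 1) = 2 * j + 1 + 1 by ring, cast_card_reducedWords_succ]
    ring
  rw [hevenBall, natCard_norm_mem, sum_image (by intro; simp), Nat.cast_sum, sum_range_succ']
  simp only [hsphere, ← mul_sum]
  linear_combination q * geom_sum_mul (q ^ 2) (n / 2) + (q - 1) *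
    (by simp [reducedWords] : ((#(reducedWords α (2 * 0)) : ℕ) : ℝ) = 1)

theorem natCard_even_norm_le_div_natCard_norm_le [Nontrivial α] (n : ℕ) :
    (Nat.card {w : FreeGroup α // Even (norm w) ∧ norm w ≤ n} : ℝ) /
        Nat.card {w : FreeGroup α // norm w ≤ n} =
      (growthRate α ^ (2 * (n / 2) + 1) - 1) /
        ((growthRate α + 1) * growthRate α ^ n - 2) := by
  rw [← growthRate_sub_one_mul_natCard_even_norm_le, ← growthRate_sub_one_mul_natCard_norm_le,
    mul_div_mul_left _ _ (sub_ne_zero.2 (one_lt_growthRate (α := α)).ne')]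

theorem limsup_natCard_even_norm_le_div_natCard_norm_le [Nontrivial α] :
    limsup (fun n => (Nat.card {w : FreeGroup α // Even (norm w) ∧ norm w ≤ n} : ℝ) /
        Nat.card {w : FreeGroup α // norm w ≤ n}) atTop =
      growthRate α / (growthRate α + 1) := by
  set q := growthRate α
  have hq : 1 < q := one_lt_growthRate
  have hpow {f : ℕ → ℕ} (hf : StrictMono f) : Tendsto (fun m => q ^ f m) atTop atTop :=
    (tendsto_pow_atTop_atTop_of_one_lt hq).comp hf.tendsto_atTop
  have heven : Tendsto (fun m => (q * q ^ (2 * m) - 1) / ((q + 1) * q ^ (2 * m) - 2)) atTop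
      (𝓝 (q / (q + 1))) :=
    (tendsto_mul_sub_div_mul_sub_atTop (by linarith)).comp
      (hpow (strictMono_mul_left_of_pos two_pos))
  have hodd : Tendsto (fun m => (1 * q ^ (2 * m + 1) - 1) / ((q + 1) * q ^ (2 * m + 1) - 2))
      atTop (𝓝 (1 / (q + 1))) :=
    (tendsto_mul_sub_div_mul_sub_atTop (by linarith)).comp
      (hpow ((strictMono_mul_left_of_pos two_pos).add_const 1))
  refine limsup_eq_of_tendsto_even_of_tendsto_odd ?_ ?_
    (div_le_div_of_nonneg_right hq.le (by linarith))
  · refine heven.congr fun m => ?_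
    rw [natCard_even_norm_le_div_natCard_norm_le, Nat.mul_div_cancel_left _ two_pos, pow_succ']
  · refine hodd.congr fun m => ?_
    rw [natCard_even_norm_le_div_natCard_norm_le, one_mul,
      show (2 * m + 1) / 2 = m by omega]

end FreeGroup

/-- In the free group of rank `p ≥ 2`, the proportion in balls of the index-two
subgroup of even-length elements has limsup `(2p-2)(2p-1)/((2p-1)²-1)`, which is
different from `1/2`. -/
theorem limsup_even_length_proportion_freeGroup (p : ℕ) (hp : 2 ≤ p) :
    limsup (fun n : ℕ =>
        (Nat.card {w : FreeGroup (Fin p) // Even (FreeGroup.norm w) ∧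
            FreeGroup.norm w ≤ n} : ℝ) /
          (Nat.card {w : FreeGroup (Fin p) // FreeGroup.norm w ≤ n} : ℝ)) atTop =
      ((2 * p - 2) * (2 * p - 1) : ℝ) / (((2 * p - 1) : ℝ) ^ 2 - 1) ∧
      ((2 * p - 2) * (2 * p - 1) : ℝ) / (((2 * p - 1) : ℝ) ^ 2 - 1) ≠ 1 / 2 := by
  have : Nontrivial (Fin p) := Fin.nontrivial_iff_two_le.2 hp
  have hq : 1 < FreeGroup.growthRate (Fin p) := FreeGroup.one_lt_growthRate
  have hvalue : ((2 * p - 2) * (2 * p - 1) : ℝ) / (((2 * p - 1) : ℝ) ^ 2 - 1) =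
      FreeGroup.growthRate (Fin p) / (FreeGroup.growthRate (Fin p) + 1) := by
    rw [FreeGroup.growthRate, Fintype.card_fin] at hq ⊢
    rw [div_eq_div_iff (by nlinarith) (by linarith)]
    ring
  refine ⟨hvalue ▸ FreeGroup.limsup_natCard_even_norm_le_div_natCard_norm_le, ?_⟩
  rw [hvalue, Ne, div_eq_div_iff (by linarith) two_ne_zero]
  intro h
  linarith
end
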